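/- arXiv:1605.04065 — 2 statements merged into one kernel-verified Lean document; each statement's English description precedes it below -/
import Mathlib

section
/- Define A_μ = { g ∈ G : lim_{n→∞} μ^{*n}(g)/μ^{*n}(e) = 1 }. Then A_μ coincides with { g ∈ G : ‖g·ξ_n − ξ_n‖₂ → 0 }, where ξ_n = μ^{*n}/‖μ^{*n}‖₂. -/
open Filter Topology
open scoped Classical

/-- Convolution of two real-valued functions on a discrete group. -/
noncomputable def conv {G : Type*} [Group G] (μ τ : G → ℝ) : G → ℝ :=
  fun y => ∑' x : G, μ x * τ (x⁻¹ * y)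

/-- `n`-fold convolution power, with `μ^{*0}` the Dirac mass at the identity. -/
noncomputable def convPow {G : Type*} [Group G] (μ : G → ℝ) : ℕ → G → ℝ
  | 0 => fun x => if x = 1 then 1 else 0
  | n + 1 => conv (convPow μ n) μ

/-- `μ` is a probability measure on the discrete group `G`. -/
def IsProb {G : Type*} [Group G] (μ : G → ℝ) : Prop :=
  (∀ x, 0 ≤ μ x) ∧ ∑' x : G, μ x = 1

/-- `μ` is symmetric. -/
def MeasSymm {G : Type*} [Group G] (μ : G → ℝ) : Prop := ∀ x, μ x⁻¹ = μ x

/-- `μ` is aperiodic: `gcd { n ≥ 1 | μ^{*n}(e) > 0 } = 1`. -/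
def IsAperiodic {G : Type*} [Group G] (μ : G → ℝ) : Prop :=
  ∀ d : ℕ, (∀ n : ℕ, 1 ≤ n → 0 < convPow μ n 1 → d ∣ n) → d = 1

/-- The support of `μ` generates `G`. -/
def GeneratingSupport {G : Type*} [Group G] (μ : G → ℝ) : Prop :=
  Subgroup.closure {x : G | 0 < μ x} = ⊤

/-- The set `A_μ = { g | μ^{*n}(g)/μ^{*n}(e) → 1 }`. -/
def Amu {G : Type*} [Group G] (μ : G → ℝ) : Set G :=
  {g | Tendsto (fun n => convPow μ n g / convPow μ n 1) atTop (𝓝 1)}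

/-- ℓ² inner product. -/
noncomputable def l2inner {G : Type*} (f h : G → ℝ) : ℝ := ∑' x : G, f x * h x

/-- ℓ² norm. -/
noncomputable def l2norm {G : Type*} (f : G → ℝ) : ℝ :=
  Real.sqrt (∑' x : G, (f x) ^ 2)

/-- Left translation: `(g · f)(x) = f (g⁻¹ x)`. -/
def ltrans {G : Type*} [Group G] (g : G) (f : G → ℝ) : G → ℝ := fun x => f (g⁻¹ * x)

/-- The normalized convolution powers `ξ_n = μ^{*n}/‖μ^{*n}‖₂`. -/
noncomputable def xi {G : Type*} [Group G] (μ : G → ℝ) (n : ℕ) : G → ℝ :=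
  fun x => convPow μ n x / l2norm (convPow μ n)

/-- Reiter-type characterization of amenability: a sequence of almost-invariant
unit vectors in `ℓ²(K)`. -/
def ReiterAmenable (K : Type*) [Group K] : Prop :=
  ∃ ψ : ℕ → K → ℝ, (∀ n, ∑' x : K, (ψ n x) ^ 2 = 1) ∧
    ∀ k : K, Tendsto
      (fun n => Real.sqrt (∑' x : K, (ψ n (k⁻¹ * x) - ψ n x) ^ 2)) atTop (𝓝 0)

/-! Write `p n = μ^{*n}`. Since `μ` is symmetric, `⟪p m, g · p k⟫ = p (m + k) g`, so
`‖g · ξ_n - ξ_n‖² = 2 - 2 p (2n) g / p (2n) e`: the ℓ²-condition is exactly the ratio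
condition along even times. Odd times are controlled by even ones:
`p (2n+1) g - p (2n+1) e = ⟪p (n+1), g · p n - p n⟫` is at most `p (2n) e ‖g · ξ_n - ξ_n‖`
by Cauchy–Schwarz and `‖p (n+1)‖ ≤ ‖p n‖`, while aperiodicity gives some `p (2t+1) e > 0`, hence
`p (2n+1) e ≥ p (2t+1) e · p (2n) e` for `n ≥ t`. -/

section Fubini

variable {α β : Type*} {F : α → β → ℝ}

lemma summable_uncurry_of_nonneg (hF : ∀ a b, 0 ≤ F a b) (hrow : ∀ a, Summable (F a))
    (hsum : Summable fun a => ∑' b, F a b) : Summable (Function.uncurry F) :=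
  (summable_prod_of_nonneg fun p => hF p.1 p.2).mpr ⟨hrow, hsum⟩

lemma summable_tsum_swap_of_nonneg (hF : ∀ a b, 0 ≤ F a b) (hrow : ∀ a, Summable (F a))
    (hsum : Summable fun a => ∑' b, F a b) : Summable fun b => ∑' a, F a b :=
  ((summable_prod_of_nonneg fun p => hF p.2 p.1).mp
    (summable_uncurry_of_nonneg hF hrow hsum).prod_symm).2

lemma tsum_comm_of_nonneg (hF : ∀ a b, 0 ≤ F a b) (hrow : ∀ a, Summable (F a))
    (hsum : Summable fun a => ∑' b, F a b) : ∑' a, ∑' b, F a b = ∑' b, ∑' a, F a b :=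
  have hF' := summable_uncurry_of_nonneg hF hrow hsum
  (hF'.tsum_comm' hrow hF'.prod_symm.prod_factor).symm

end Fubini

lemma le_tsum_of_nonneg {α : Type*} {f : α → ℝ} (h0 : ∀ x, 0 ≤ f x) (hs : Summable f) (x : α) :
    f x ≤ ∑' y, f y :=
  hs.le_tsum x fun y _ => h0 y

section Convolution

variable {G : Type*} [Group G] {f g h : G → ℝ}

lemma tsum_translate (f : G → ℝ) (a : G) : ∑' x, f (a * x) = ∑' x, f x :=
  (Equiv.mulLeft a).tsum_eq f

lemma summable_conv_term (hf : ∀ x, 0 ≤ f x) (hg : ∀ x, 0 ≤ g x) (hfs : Summable f)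
    (hgs : Summable g) (y : G) : Summable fun x => f x * g (x⁻¹ * y) :=
  .of_nonneg_of_le (fun x => mul_nonneg (hf x) (hg _))
    (fun x => mul_le_mul_of_nonneg_left (le_tsum_of_nonneg hg hgs _) (hf x))
    (hfs.mul_right _)

lemma conv_nonneg (hf : ∀ x, 0 ≤ f x) (hg : ∀ x, 0 ≤ g x) (y : G) : 0 ≤ conv f g y :=
  tsum_nonneg fun x => mul_nonneg (hf x) (hg _)

lemma summable_conv_row (hgs : Summable g) (x : G) : Summable fun y => f x * g (x⁻¹ * y) :=
  (((Equiv.mulLeft x⁻¹).summable_iff).mpr hgs).mul_left (f x)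

lemma tsum_conv_row (g : G → ℝ) (x : G) : ∑' y, f x * g (x⁻¹ * y) = f x * ∑' y, g y := by
  rw [tsum_mul_left, tsum_translate]

lemma summable_conv (hf : ∀ x, 0 ≤ f x) (hg : ∀ x, 0 ≤ g x) (hfs : Summable f)
    (hgs : Summable g) : Summable (conv f g) :=
  summable_tsum_swap_of_nonneg (fun x y => mul_nonneg (hf x) (hg _)) (summable_conv_row hgs)
    (by simpa only [tsum_conv_row] using hfs.mul_right _)

lemma tsum_conv (hf : ∀ x, 0 ≤ f x) (hg : ∀ x, 0 ≤ g x) (hfs : Summable f)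
    (hgs : Summable g) : ∑' y, conv f g y = (∑' x, f x) * ∑' x, g x := by
  unfold conv
  rw [← tsum_comm_of_nonneg (fun x y => mul_nonneg (hf x) (hg _)) (summable_conv_row hgs)
    (by simpa only [tsum_conv_row] using hfs.mul_right _)]
  simp only [tsum_conv_row, tsum_mul_right]

lemma conv_assoc (hf : ∀ x, 0 ≤ f x) (hg : ∀ x, 0 ≤ g x) (hh : ∀ x, 0 ≤ h x)
    (hfs : Summable f) (hgs : Summable g) (hhs : Summable h) :
    conv (conv f g) h = conv f (conv g h) := by
  funext y
  have hrow : ∀ x, ∑' z, f x * g (x⁻¹ * z) * h (z⁻¹ * y) = f x * conv g h (x⁻¹ * y) := by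
    intro x
    simp only [mul_assoc, tsum_mul_left, conv]
    rw [← tsum_translate (fun z => g (x⁻¹ * z) * h (z⁻¹ * y)) x]
    simp only [inv_mul_cancel_left, mul_inv_rev, mul_assoc]
  calc conv (conv f g) h y = ∑' z, ∑' x, f x * g (x⁻¹ * z) * h (z⁻¹ * y) := by
        simp only [conv, tsum_mul_right]
    _ = ∑' x, ∑' z, f x * g (x⁻¹ * z) * h (z⁻¹ * y) := by
        refine (tsum_comm_of_nonneg (fun x z => mul_nonneg (mul_nonneg (hf x) (hg _)) (hh _))
          (fun x => ?_) ?_).symm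
        · exact .of_nonneg_of_le (fun z => mul_nonneg (mul_nonneg (hf x) (hg _)) (hh _))
            (fun z => mul_le_mul_of_nonneg_left (le_tsum_of_nonneg hh hhs _)
              (mul_nonneg (hf x) (hg _)))
            ((summable_conv_row hgs x).mul_right _)
        · simpa only [hrow] using
            summable_conv_term hf (conv_nonneg hg hh) hfs (summable_conv hg hh hgs hhs) y
    _ = conv f (conv g h) y := tsum_congr hrow

lemma conv_dirac (f : G → ℝ) : conv f (fun x => if x = 1 then 1 else 0) = f := by
  funext y
  refine (tsum_eq_single y fun x hx => ?_).trans (by simp)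
  simp [mt inv_mul_eq_one.mp hx]

lemma dirac_conv (f : G → ℝ) : conv (fun x => if x = 1 then 1 else 0) f = f := by
  funext y
  refine (tsum_eq_single 1 fun x hx => ?_).trans (by simp)
  simp [hx]

lemma conv_inv_apply (hf : MeasSymm f) (hg : MeasSymm g) (x : G) :
    conv f g x⁻¹ = conv g f x := by
  unfold conv
  rw [← tsum_translate (fun w => g w * f (w⁻¹ * x)) x]
  refine tsum_congr fun z => ?_
  rw [← mul_inv_rev, hg, ← hf z, mul_comm, mul_inv_rev, inv_mul_cancel_right]

lemma l2inner_ltrans_of_symm (hh : MeasSymm h) (b : G) :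
    l2inner f (ltrans b h) = conv f h b := by
  refine tsum_congr fun x => ?_
  rw [ltrans, ← hh, mul_inv_rev, inv_inv]

end Convolution

section L2

variable {ι : Type*} {f h k : ι → ℝ}

lemma l2norm_eq_norm (hf : Memℓp f 2) : l2norm f = ‖(⟨f, hf⟩ : lp (fun _ : ι => ℝ) 2)‖ := by
  rw [lp.norm_eq_tsum_rpow (by norm_num), l2norm, Real.sqrt_eq_rpow]
  norm_num

lemma l2inner_eq_inner (hf : Memℓp f 2) (hh : Memℓp h 2) :
    l2inner f h = inner ℝ (⟨f, hf⟩ : lp (fun _ : ι => ℝ) 2) ⟨h, hh⟩ := by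
  rw [lp.inner_eq_tsum]
  exact tsum_congr fun x => (Real.inner_apply (f x) (h x)).symm

lemma l2inner_comm (f h : ι → ℝ) : l2inner f h = l2inner h f :=
  tsum_congr fun _ => mul_comm _ _

lemma l2norm_pos (hf : Memℓp f 2) (hne : f ≠ 0) : 0 < l2norm f := by
  rw [l2norm_eq_norm hf, norm_pos_iff]
  exact fun h0 => hne (congrArg Subtype.val h0)

lemma l2norm_nonneg (f : ι → ℝ) : 0 ≤ l2norm f := Real.sqrt_nonneg _

lemma sq_l2norm (f : ι → ℝ) : l2norm f ^ 2 = l2inner f f := by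
  rw [l2norm, Real.sq_sqrt (tsum_nonneg fun x => sq_nonneg _), l2inner]
  simp only [sq]

lemma abs_l2inner_le (hf : Memℓp f 2) (hh : Memℓp h 2) :
    |l2inner f h| ≤ l2norm f * l2norm h := by
  rw [l2inner_eq_inner hf hh, l2norm_eq_norm hf, l2norm_eq_norm hh]
  exact abs_real_inner_le_norm _ _

lemma l2inner_sub_right (hf : Memℓp f 2) (hh : Memℓp h 2) (hk : Memℓp k 2) :
    l2inner f (h - k) = l2inner f h - l2inner f k := by
  rw [l2inner_eq_inner hf (hh.sub hk), l2inner_eq_inner hf hh, l2inner_eq_inner hf hk,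
    ← inner_sub_right]
  rfl

lemma sq_l2norm_sub (hf : Memℓp f 2) (hh : Memℓp h 2) :
    l2norm (f - h) ^ 2 = l2norm f ^ 2 - 2 * l2inner f h + l2norm h ^ 2 := by
  rw [l2norm_eq_norm (hf.sub hh), l2norm_eq_norm hf, l2norm_eq_norm hh,
    l2inner_eq_inner hf hh, ← norm_sub_sq_real]
  rfl

lemma l2norm_div_const (f : ι → ℝ) (c : ℝ) : l2norm (fun x => f x / c) = l2norm f / |c| := by
  simp only [l2norm, div_pow, tsum_div_const]
  rw [Real.sqrt_div' _ (sq_nonneg c), Real.sqrt_sq_eq_abs]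

end L2

section Translation

variable {G : Type*} [Group G]

lemma Memℓp.ltrans {f : G → ℝ} {p : ENNReal} (hp : 0 < p.toReal)
    (hf : Memℓp f p) (g : G) : Memℓp (ltrans g f) p :=
  (memℓp_gen_iff hp).mpr ((Equiv.mulLeft g⁻¹).summable_iff.mpr ((memℓp_gen_iff hp).mp hf))

lemma ltrans_one (f : G → ℝ) : ltrans 1 f = f := by
  funext x
  simp [ltrans]

lemma l2norm_ltrans (f : G → ℝ) (g : G) : l2norm (ltrans g f) = l2norm f := by
  unfold l2norm ltrans
  rw [tsum_translate (fun x => f x ^ 2)]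

end Translation

section ConvPow

variable {G : Type*} [Group G] {μ : G → ℝ}

lemma IsProb.summable (hμ : IsProb μ) : Summable μ := by
  by_contra hs
  simpa [tsum_eq_zero_of_not_summable hs] using hμ.2

lemma IsProb.conv {ν : G → ℝ} (hμ : IsProb μ) (hν : IsProb ν) : IsProb (conv μ ν) :=
  ⟨conv_nonneg hμ.1 hν.1, by rw [tsum_conv hμ.1 hν.1 hμ.summable hν.summable, hμ.2, hν.2, one_mul]⟩

lemma isProb_convPow (hμ : IsProb μ) (n : ℕ) : IsProb (convPow μ n) := by
  induction n with
  | zero => exact ⟨fun x => by simp only [convPow]; positivity, tsum_ite_eq 1 1⟩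
  | succ n ih => exact ih.conv hμ

lemma convPow_one : convPow μ 1 = μ := dirac_conv μ

lemma convPow_add (hμ : IsProb μ) (m n : ℕ) :
    convPow μ (m + n) = conv (convPow μ m) (convPow μ n) := by
  induction n with
  | zero => exact (conv_dirac _).symm
  | succ n ih =>
    have hm := isProb_convPow hμ m
    have hn := isProb_convPow hμ n
    rw [← add_assoc, convPow, ih, convPow,
      conv_assoc hm.1 hn.1 hμ.1 hm.summable hn.summable hμ.summable]

lemma measSymm_convPow (hμ : IsProb μ) (hs : MeasSymm μ) (n : ℕ) : MeasSymm (convPow μ n) := by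
  induction n with
  | zero => intro x; simp [convPow]
  | succ n ih =>
    have hcomm : conv μ (convPow μ n) = convPow μ (n + 1) := by
      rw [add_comm, convPow_add hμ, convPow_one]
    intro x
    rw [convPow, conv_inv_apply ih hs, hcomm]
    rfl

lemma IsProb.memℓp_two (hμ : IsProb μ) : Memℓp μ 2 := by
  refine Memℓp.of_exponent_ge ?_ (by norm_num : (1 : ENNReal) ≤ 2)
  refine (memℓp_gen_iff (by norm_num)).mpr ?_
  simpa [abs_of_nonneg (hμ.1 _)] using hμ.summable

lemma memℓp_convPow (hμ : IsProb μ) (n : ℕ) : Memℓp (convPow μ n) 2 :=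
  (isProb_convPow hμ n).memℓp_two

lemma IsProb.ne_zero (hμ : IsProb μ) : μ ≠ 0 := by
  rintro rfl
  simpa using hμ.2

lemma conv_le_of_le {f : G → ℝ} {C : ℝ} (hμ : IsProb μ) (hf : ∀ x, 0 ≤ f x) (hfs : Summable f)
    (hC : ∀ x, f x ≤ C) (y : G) : conv μ f y ≤ C :=
  calc conv μ f y ≤ ∑' x, μ x * C :=
        (summable_conv_term hμ.1 hf hμ.summable hfs y).tsum_le_tsum
          (fun x => mul_le_mul_of_nonneg_left (hC _) (hμ.1 x)) (hμ.summable.mul_right C)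
    _ = C := by rw [tsum_mul_right, hμ.2, one_mul]

end ConvPow

section ReturnProbability

variable {G : Type*} [Group G] {μ : G → ℝ}

lemma l2inner_convPow_ltrans (hμ : IsProb μ) (hs : MeasSymm μ) (m k : ℕ) (b : G) :
    l2inner (convPow μ m) (ltrans b (convPow μ k)) = convPow μ (m + k) b := by
  rw [l2inner_ltrans_of_symm (measSymm_convPow hμ hs k), convPow_add hμ]

lemma sq_l2norm_convPow (hμ : IsProb μ) (hs : MeasSymm μ) (n : ℕ) :
    l2norm (convPow μ n) ^ 2 = convPow μ (n + n) 1 := by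
  rw [sq_l2norm, ← l2inner_convPow_ltrans hμ hs, ltrans_one]

lemma convPow_le_l2norm_mul (hμ : IsProb μ) (hs : MeasSymm μ) (m k : ℕ) (x : G) :
    convPow μ (m + k) x ≤ l2norm (convPow μ m) * l2norm (convPow μ k) := by
  have h := abs_l2inner_le (memℓp_convPow hμ m) ((memℓp_convPow hμ k).ltrans (by norm_num) x)
  rw [l2inner_convPow_ltrans hμ hs, l2norm_ltrans] at h
  exact (le_abs_self _).trans h

lemma l2norm_convPow_succ_le (hμ : IsProb μ) (hs : MeasSymm μ) (n : ℕ) :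
    l2norm (convPow μ (n + 1)) ≤ l2norm (convPow μ n) := by
  set s := l2norm (convPow μ n)
  set t := l2norm (convPow μ (n + 1))
  have hst : t ^ 2 ≤ s * t := by
    rw [sq_l2norm_convPow hμ hs, show n + 1 + (n + 1) = 1 + (n + (n + 1)) by omega,
      convPow_add hμ, convPow_one]
    exact conv_le_of_le hμ (isProb_convPow hμ _).1 (isProb_convPow hμ _).summable
      (convPow_le_l2norm_mul hμ hs n (n + 1)) 1
  nlinarith [l2norm_nonneg (convPow μ n), l2norm_nonneg (convPow μ (n + 1))]

lemma convPow_add_self_antitone (hμ : IsProb μ) (hs : MeasSymm μ) :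
    Antitone fun n => convPow μ (n + n) 1 := by
  refine antitone_nat_of_succ_le fun n => ?_
  simp only [← sq_l2norm_convPow hμ hs]
  exact pow_le_pow_left₀ (l2norm_nonneg _) (l2norm_convPow_succ_le hμ hs n) 2

lemma l2norm_convPow_pos (hμ : IsProb μ) (n : ℕ) : 0 < l2norm (convPow μ n) :=
  l2norm_pos (memℓp_convPow hμ n) (isProb_convPow hμ n).ne_zero

lemma convPow_add_self_pos (hμ : IsProb μ) (hs : MeasSymm μ) (n : ℕ) :
    0 < convPow μ (n + n) 1 :=
  sq_l2norm_convPow hμ hs n ▸ pow_pos (l2norm_convPow_pos hμ n) 2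

lemma convPow_mul_convPow_le (hμ : IsProb μ) (m k : ℕ) :
    convPow μ m 1 * convPow μ k 1 ≤ convPow μ (m + k) 1 := by
  have hm := isProb_convPow hμ m
  have hk := isProb_convPow hμ k
  rw [convPow_add hμ]
  simpa [conv] using le_tsum_of_nonneg (fun x => mul_nonneg (hm.1 x) (hk.1 _))
    (summable_conv_term hm.1 hk.1 hm.summable hk.summable 1) 1

lemma exists_convPow_odd_pos (haper : IsAperiodic μ) : ∃ t, 0 < convPow μ (t + t + 1) 1 := by
  by_contra! h
  refine absurd (haper 2 fun n _ hn => ?_) (by norm_num)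
  obtain ⟨t, rfl⟩ | ⟨t, rfl⟩ := Nat.even_or_odd n
  · exact even_iff_two_dvd.mp ⟨t, rfl⟩
  · exact absurd hn (not_lt.mpr (by simpa [two_mul] using h t))

lemma convPow_odd_lower_bound (hμ : IsProb μ) (hs : MeasSymm μ) {t n : ℕ} (htn : t ≤ n) :
    convPow μ (t + t + 1) 1 * convPow μ (n + n) 1 ≤ convPow μ (n + n + 1) 1 := by
  have h := convPow_mul_convPow_le hμ (t + t + 1) ((n - t) + (n - t))
  rw [show t + t + 1 + (n - t + (n - t)) = n + n + 1 by omega] at h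
  exact (mul_le_mul_of_nonneg_left (convPow_add_self_antitone hμ hs (Nat.sub_le n t))
    ((isProb_convPow hμ _).1 1)).trans h

lemma l2norm_ltrans_xi_sub (g : G) (n : ℕ) :
    l2norm (ltrans g (xi μ n) - xi μ n) =
      l2norm (ltrans g (convPow μ n) - convPow μ n) / l2norm (convPow μ n) := by
  rw [← abs_of_nonneg (l2norm_nonneg (convPow μ n)), ← l2norm_div_const]
  congr 1
  funext x
  exact (sub_div _ _ _).symm

lemma sq_l2norm_ltrans_convPow_sub (hμ : IsProb μ) (hs : MeasSymm μ) (g : G) (n : ℕ) :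
    l2norm (ltrans g (convPow μ n) - convPow μ n) ^ 2 =
      2 * convPow μ (n + n) 1 - 2 * convPow μ (n + n) g := by
  have hp := memℓp_convPow hμ n
  rw [sq_l2norm_sub (hp.ltrans (by norm_num) g) hp, l2norm_ltrans, sq_l2norm_convPow hμ hs,
    l2inner_comm, l2inner_convPow_ltrans hμ hs]
  ring

lemma sq_l2norm_ltrans_xi_sub (hμ : IsProb μ) (hs : MeasSymm μ) (g : G) (n : ℕ) :
    l2norm (ltrans g (xi μ n) - xi μ n) ^ 2 =
      2 - 2 * (convPow μ (n + n) g / convPow μ (n + n) 1) := by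
  have hpos := convPow_add_self_pos hμ hs n
  rw [l2norm_ltrans_xi_sub, div_pow, sq_l2norm_ltrans_convPow_sub hμ hs, sq_l2norm_convPow hμ hs]
  field_simp

lemma abs_convPow_odd_sub_le (hμ : IsProb μ) (hs : MeasSymm μ) (g : G) (n : ℕ) :
    |convPow μ (n + n + 1) g - convPow μ (n + n + 1) 1| ≤
      convPow μ (n + n) 1 * l2norm (ltrans g (xi μ n) - xi μ n) := by
  have hp := memℓp_convPow hμ n
  have hdiff : convPow μ (n + n + 1) g - convPow μ (n + n + 1) 1 =
      l2inner (convPow μ (n + 1)) (ltrans g (convPow μ n) - convPow μ n) := by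
    rw [l2inner_sub_right (memℓp_convPow hμ _) (hp.ltrans (by norm_num) g) hp,
      l2inner_convPow_ltrans hμ hs, ← ltrans_one (convPow μ n), l2inner_convPow_ltrans hμ hs,
      show n + 1 + n = n + n + 1 by omega]
  rw [hdiff, l2norm_ltrans_xi_sub, ← sq_l2norm_convPow hμ hs, sq, mul_assoc,
    mul_div_cancel₀ _ (l2norm_convPow_pos hμ n).ne']
  exact (abs_l2inner_le (memℓp_convPow hμ _) ((hp.ltrans (by norm_num) g).sub hp)).trans
    (mul_le_mul_of_nonneg_right (l2norm_convPow_succ_le hμ hs n) (l2norm_nonneg _))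

lemma exists_abs_ratio_odd_sub_one_le_mul (hμ : IsProb μ) (hs : MeasSymm μ)
    (haper : IsAperiodic μ) (g : G) : ∃ C, ∀ᶠ n in atTop,
      |convPow μ (n + n + 1) g / convPow μ (n + n + 1) 1 - 1| ≤
        C * l2norm (ltrans g (xi μ n) - xi μ n) := by
  obtain ⟨t, ht⟩ := exists_convPow_odd_pos haper
  refine ⟨(convPow μ (t + t + 1) 1)⁻¹, eventually_atTop.mpr ⟨t, fun n hn => ?_⟩⟩
  have hlow := convPow_odd_lower_bound hμ hs hn
  have hpos := (mul_pos ht (convPow_add_self_pos hμ hs n)).trans_le hlow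
  rw [inv_mul_eq_div, div_sub_one hpos.ne', abs_div, abs_of_pos hpos, div_le_div_iff₀ hpos ht]
  calc |convPow μ (n + n + 1) g - convPow μ (n + n + 1) 1| * convPow μ (t + t + 1) 1
      ≤ convPow μ (n + n) 1 * l2norm (ltrans g (xi μ n) - xi μ n) * convPow μ (t + t + 1) 1 :=
        mul_le_mul_of_nonneg_right (abs_convPow_odd_sub_le hμ hs g n) ht.le
    _ = l2norm (ltrans g (xi μ n) - xi μ n) *
          (convPow μ (t + t + 1) 1 * convPow μ (n + n) 1) := by ring
    _ ≤ l2norm (ltrans g (xi μ n) - xi μ n) * convPow μ (n + n + 1) 1 :=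
        mul_le_mul_of_nonneg_left hlow (l2norm_nonneg _)

end ReturnProbability

lemma tendsto_of_tendsto_even_of_tendsto_odd {α : Type*} {a : ℕ → α} {l : Filter α}
    (he : Tendsto (fun n => a (n + n)) atTop l) (ho : Tendsto (fun n => a (n + n + 1)) atTop l) :
    Tendsto a atTop l := by
  intro s hs
  obtain ⟨N, hN⟩ := eventually_atTop.mp ((he.eventually_mem hs).and (ho.eventually_mem hs))
  refine eventually_atTop.mpr ⟨N + N, fun m hm => ?_⟩
  obtain ⟨k, rfl | rfl⟩ := Nat.even_or_odd' m
  · exact two_mul k ▸ (hN k (by omega)).1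
  · exact two_mul k ▸ (hN k (by omega)).2

theorem stmt2_general {G : Type*} [Group G] (μ : G → ℝ)
    (hprob : IsProb μ) (hsymm : MeasSymm μ) (haper : IsAperiodic μ) :
    Amu μ = {g : G | Tendsto (fun n => l2norm (ltrans g (xi μ n) - xi μ n)) atTop (𝓝 0)} := by
  ext g
  set e : ℕ → ℝ := fun n => l2norm (ltrans g (xi μ n) - xi μ n)
  have heven : ∀ n, ‖convPow μ (n + n) g / convPow μ (n + n) 1 - 1‖ = e n ^ 2 / 2 := fun n => by
    have h := sq_l2norm_ltrans_xi_sub hprob hsymm g n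
    rw [Real.norm_eq_abs, abs_of_nonpos (by nlinarith [sq_nonneg (e n)])]
    linarith
  obtain ⟨C, hodd⟩ := exists_abs_ratio_odd_sub_one_le_mul hprob hsymm haper g
  show Tendsto _ atTop (𝓝 1) ↔ Tendsto e atTop (𝓝 0)
  rw [tendsto_iff_norm_sub_tendsto_zero]
  constructor
  · intro h
    have hdouble : Tendsto (fun n : ℕ => n + n) atTop atTop :=
      tendsto_atTop_mono (fun n => Nat.le_add_left n n) tendsto_id
    have h2 := ((h.comp hdouble).const_mul 2).sqrt
    simp only [Function.comp_def, heven, mul_zero, Real.sqrt_zero] at h2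
    refine h2.congr fun n => ?_
    rw [mul_div_cancel₀ _ two_ne_zero, Real.sqrt_sq (l2norm_nonneg _)]
  · intro h
    refine tendsto_of_tendsto_even_of_tendsto_odd ?_ ?_
    · simpa [heven] using (h.pow 2).div_const 2
    · exact squeeze_zero' (.of_forall fun n => norm_nonneg _) hodd (by simpa using h.const_mul C)

theorem stmt2 {G : Type*} [Group G] [Group.FG G] (μ : G → ℝ)
    (hprob : IsProb μ) (hsymm : MeasSymm μ) (haper : IsAperiodic μ)
    (hgen : GeneratingSupport μ) :
    Amu μ = {g : G | Tendsto (fun n => l2norm (ltrans g (xi μ n) - xi μ n)) atTop (𝓝 0)} :=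
  stmt2_general μ hprob hsymm haper
end

section
/- There exists a finitely generated group G and two symmetric aperiodic probability measures μ, τ on G, each with support generating G, such that A_{G,μ} ≠ A_{G,τ}. (Concretely G = C₂ * C₃ works: one can choose μ with a ∈ A_μ and τ with b ∈ A_τ, and if A_μ = A_τ then this common subgroup would contain ⟨a,b⟩ = G, contradicting non-amenability of G.) -/
open Filter Topology
open scoped Classical

/-- The witness property for statement 13. -/
def Stmt13Witness (G : Type) [Group G] (μ τ : G → ℝ) : Prop :=
  Group.FG G
    ∧ IsProb μ ∧ MeasSymm μ ∧ IsAperiodic μ ∧ GeneratingSupport μ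
    ∧ IsProb τ ∧ MeasSymm τ ∧ IsAperiodic τ ∧ GeneratingSupport τ
    ∧ Amu μ ≠ Amu τ

/-!
Realize `C₂ * C₃ = ⟨a⟩ * ⟨b⟩` as a group of permutations of its reduced words, and let
`μ = u_A * u_B * u_A`, `τ = u_B * u_A * u_B`, where `u_A`, `u_B` are the uniform measures on the
finite subgroups `A = ⟨a⟩`, `B = ⟨b⟩`. Both are symmetric, charge `e` (hence are aperiodic) and
charge `A ∪ B` (hence have generating support). Since `b • τ = τ`, we have `τ^{*n}(b) = τ^{*n}(e)`
for `n ≥ 1`, so `b ∈ A_τ`. On the other hand `b ∉ A_μ`: for `u = μ^{*n}` one has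
`μ^{*2n}(b) / μ^{*2n}(e) = 1 - ‖λ_b u - u‖² / (2‖u‖²)`, and a ping-pong argument bounds
`‖u‖² ≤ 24 ‖λ_b u - u‖²` for every `a`-invariant `u ∈ ℓ²`: `a`-invariance puts half of the mass
of `u` on the words starting with `a`, and `b`, `b⁻¹` move that half, up to an error controlled by
`‖λ_b u - u‖`, onto the disjoint sets of words starting with `b` and with `b⁻¹`.
-/

section PingPong

variable {G : Type*} [Group G]

lemma summable_sq_comp_mul_left {u : G → ℝ} (hu : Summable fun x => u x ^ 2) (g : G) :
    Summable fun x => u (g * x) ^ 2 :=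
  (Equiv.mulLeft g).summable_iff.2 hu

lemma summable_sq_sub_comp_mul_left {u : G → ℝ} (hu : Summable fun x => u x ^ 2) (g : G) :
    Summable fun x => (u (g * x) - u x) ^ 2 :=
  .of_nonneg_of_le (fun _ => sq_nonneg _) (fun x => by nlinarith [sq_nonneg (u (g * x) + u x)])
    (((summable_sq_comp_mul_left hu g).add hu).mul_left 2)

lemma tsum_sq_sub_comp_inv_mul (u : G → ℝ) (g : G) :
    ∑' x, (u (g⁻¹ * x) - u x) ^ 2 = ∑' x, (u (g * x) - u x) ^ 2 := by
  rw [← (Equiv.mulLeft g).tsum_eq]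
  simp only [Equiv.coe_mulLeft, inv_mul_cancel_left]
  exact tsum_congr fun x => by ring

lemma tsum_indicator_eq_half {f : G → ℝ} (hf : Summable f) {a : G} {P : Set G}
    (hP : ∀ x, a * x ∈ P ↔ x ∉ P) (hfa : ∀ x, f (a * x) = f x) :
    ∑' x, P.indicator f x = (∑' x, f x) / 2 := by
  have hswap : ∑' x, Pᶜ.indicator f x = ∑' x, P.indicator f x := by
    rw [← (Equiv.mulLeft a).tsum_eq]
    refine tsum_congr fun x => ?_
    by_cases hx : x ∈ P
    · rw [Equiv.coe_mulLeft, Set.indicator_of_mem (show a * x ∈ Pᶜ from fun h => (hP x).1 h hx),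
        Set.indicator_of_mem hx, hfa]
    · rw [Equiv.coe_mulLeft, Set.indicator_of_notMem (not_not.2 ((hP x).2 hx)),
        Set.indicator_of_notMem hx]
  have hsplit := (hf.indicator P).tsum_add (hf.indicator Pᶜ)
  simp only [Set.indicator_self_add_compl_apply, hswap] at hsplit
  linarith

lemma tsum_indicator_add_le {α : Type*} {f : α → ℝ} (hf : Summable f) (hf0 : ∀ x, 0 ≤ f x)
    {P Q R : Set α}
    (hPQ : Disjoint P Q) (hPR : Disjoint P R) (hQR : Disjoint Q R) :
    ∑' x, P.indicator f x + ∑' x, Q.indicator f x + ∑' x, R.indicator f x ≤ ∑' x, f x := by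
  rw [← (hf.indicator P).tsum_add (hf.indicator Q), ← ((hf.indicator P).add
    (hf.indicator Q)).tsum_add (hf.indicator R)]
  refine Summable.tsum_le_tsum (fun x => ?_) (((hf.indicator P).add
    (hf.indicator Q)).add (hf.indicator R)) hf
  rw [← congrFun (Set.indicator_union_of_disjoint hPQ f) x,
    ← congrFun (Set.indicator_union_of_disjoint (hPR.union_left hQR) f) x]
  exact Set.indicator_le_self' (fun x _ => hf0 x) x

lemma tsum_indicator_sq_le_of_mapsTo {u : G → ℝ} (hu : Summable fun x => u x ^ 2) {g : G}
    {P T : Set G} (hgP : ∀ x ∈ P, g * x ∈ T) :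
    3 * ∑' x, P.indicator (u · ^ 2) x
      ≤ 4 * ∑' x, T.indicator (u · ^ 2) x + 12 * ∑' x, (u (g * x) - u x) ^ 2 := by
  have hT : Summable fun x => T.indicator (u · ^ 2) (g * x) :=
    (hu.indicator T).comp_injective (mul_right_injective g)
  have hD := summable_sq_sub_comp_mul_left hu g
  calc 3 * ∑' x, P.indicator (u · ^ 2) x = ∑' x, 3 * P.indicator (u · ^ 2) x := by
        rw [tsum_mul_left]
    _ ≤ ∑' x, (4 * T.indicator (u · ^ 2) (g * x) + 12 * (u (g * x) - u x) ^ 2) := by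
      refine Summable.tsum_le_tsum (fun x => ?_) ((hu.indicator P).mul_left 3)
        ((hT.mul_left 4).add (hD.mul_left 12))
      by_cases hx : x ∈ P
      · rw [Set.indicator_of_mem hx, Set.indicator_of_mem (hgP x hx)]
        nlinarith [sq_nonneg (3 * u x - 4 * u (g * x))]
      · rw [Set.indicator_of_notMem hx, mul_zero]
        have := Set.indicator_nonneg (fun y _ => sq_nonneg (u y)) (g * x) (s := T)
        positivity
    _ = 4 * ∑' x, T.indicator (u · ^ 2) x + 12 * ∑' x, (u (g * x) - u x) ^ 2 := by
      rw [(hT.mul_left 4).tsum_add (hD.mul_left 12), tsum_mul_left, tsum_mul_left,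
        ← (Equiv.mulLeft g).tsum_eq (T.indicator (u · ^ 2))]
      rfl

theorem tsum_sq_le_of_pingPong {a b : G} {P Q R : Set G}
    (ha : ∀ x, a * x ∈ P ↔ x ∉ P) (hb : ∀ x ∈ P, b * x ∈ Q) (hb' : ∀ x ∈ P, b⁻¹ * x ∈ R)
    (hPQ : Disjoint P Q) (hPR : Disjoint P R) (hQR : Disjoint Q R)
    {u : G → ℝ} (hu : Summable fun x => u x ^ 2) (hua : ∀ x, u (a * x) = u x) :
    ∑' x, u x ^ 2 ≤ 24 * ∑' x, (u (b * x) - u x) ^ 2 := by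
  have hP := tsum_indicator_eq_half hu ha (fun x => by rw [hua])
  have hQ := tsum_indicator_sq_le_of_mapsTo hu hb
  have hR := tsum_indicator_sq_le_of_mapsTo hu hb'
  have hPQR := tsum_indicator_add_le hu (fun x => sq_nonneg (u x)) hPQ hPR hQR
  rw [tsum_sq_sub_comp_inv_mul] at hR
  linarith

end PingPong

namespace MonoidAlgebra

section Convolution

variable {G : Type*} [Group G]

lemma summable_coeff_mul {M : Type*} (f : MonoidAlgebra ℝ M) (h : M → ℝ) :
    Summable fun x => f.coeff x * h x :=
  summable_of_ne_finset_zero (s := f.coeff.support)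
    fun x hx => by rw [Finsupp.notMem_support_iff.1 hx, zero_mul]

lemma coeff_mul_eq_tsum (f g : MonoidAlgebra ℝ G) (y : G) :
    (f * g).coeff y = ∑' x, f.coeff x * g.coeff (x⁻¹ * y) := by
  rw [coeff_mul_apply_left, Finsupp.sum, tsum_eq_sum]
  exact fun x hx => by rw [Finsupp.notMem_support_iff.1 hx, zero_mul]

lemma convPow_coeff (f : MonoidAlgebra ℝ G) : ∀ n, convPow f.coeff n = (f ^ n).coeff
  | 0 => by
    funext x
    simp [convPow, one_def, Finsupp.single_apply, eq_comm]
  | n + 1 => by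
    funext y
    rw [pow_succ, coeff_mul_eq_tsum, ← convPow_coeff f n]
    rfl

lemma summable_sq_coeff {M : Type*} (f : MonoidAlgebra ℝ M) :
    Summable fun x => f.coeff x ^ 2 := by
  simpa only [sq] using summable_coeff_mul f f.coeff

lemma coeff_mul_nonneg {f g : MonoidAlgebra ℝ G} (hf : 0 ≤ f.coeff) (hg : 0 ≤ g.coeff) :
    0 ≤ (f * g).coeff := fun y => by
  rw [coeff_mul_eq_tsum]
  exact tsum_nonneg fun x => mul_nonneg (hf x) (hg _)

lemma coeff_mul_le {f g : MonoidAlgebra ℝ G} (hf : 0 ≤ f.coeff) (hg : 0 ≤ g.coeff) (x y : G) :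
    f.coeff x * g.coeff (x⁻¹ * y) ≤ (f * g).coeff y := by
  rw [coeff_mul_eq_tsum]
  exact (summable_coeff_mul f fun z => g.coeff (z⁻¹ * y)).le_tsum x
    fun z _ => mul_nonneg (hf z) (hg _)

lemma coeff_pow_nonneg {f : MonoidAlgebra ℝ G} (hf : 0 ≤ f.coeff) : ∀ n, 0 ≤ (f ^ n).coeff
  | 0 => fun x => by by_cases hx : x = 1 <;> simp [one_def, hx]
  | n + 1 => by rw [pow_succ]; exact coeff_mul_nonneg (coeff_pow_nonneg hf n) hf

lemma coeff_pow_one_pos {f : MonoidAlgebra ℝ G} (hf : 0 ≤ f.coeff) (h1 : 0 < f.coeff 1) :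
    ∀ n, 0 < (f ^ n).coeff 1
  | 0 => by simp [one_def]
  | n + 1 => by
    have := coeff_mul_le (coeff_pow_nonneg hf n) hf 1 1
    rw [inv_one, one_mul, ← pow_succ] at this
    exact (mul_pos (coeff_pow_one_pos hf h1 n) h1).trans_le this

lemma coeff_mul_of_single_mul_eq {f : MonoidAlgebra ℝ G} {g : G} (h : single g 1 * f = f)
    (x : G) : f.coeff (g * x) = f.coeff x := by
  conv_lhs => rw [← h]
  rw [coeff_single_mul_apply, one_mul, inv_mul_cancel_left]

noncomputable def totalMass : MonoidAlgebra ℝ G →ₐ[ℝ] ℝ := lift ℝ ℝ G 1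

lemma tsum_coeff (f : MonoidAlgebra ℝ G) : ∑' x, f.coeff x = totalMass f := by
  rw [tsum_eq_sum fun x hx => Finsupp.notMem_support_iff.1 hx, totalMass, lift_apply,
    Finsupp.sum]
  simp

noncomputable def reflect (f : MonoidAlgebra ℝ G) : MonoidAlgebra ℝ G :=
  ofCoeff (Finsupp.equivMapDomain (Equiv.inv G) f.coeff)

lemma reflect_coeff (f : MonoidAlgebra ℝ G) (x : G) : (reflect f).coeff x = f.coeff x⁻¹ := by
  simp [reflect, coeff_ofCoeff, Finsupp.equivMapDomain_apply]

lemma reflect_mul (f g : MonoidAlgebra ℝ G) : reflect (f * g) = reflect g * reflect f := by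
  ext x
  rw [reflect_coeff, coeff_mul_eq_tsum, coeff_mul_eq_tsum, ← (Equiv.mulLeft x⁻¹).tsum_eq]
  refine tsum_congr fun y => ?_
  simp only [Equiv.coe_mulLeft, reflect_coeff, mul_inv_rev, inv_inv, mul_inv_cancel_right]
  ring

lemma reflect_pow {f : MonoidAlgebra ℝ G} (hf : reflect f = f) : ∀ n, reflect (f ^ n) = f ^ n
  | 0 => by ext x; by_cases hx : x = 1 <;> simp [reflect_coeff, one_def, hx]
  | n + 1 => by rw [pow_succ, reflect_mul, hf, reflect_pow hf n, pow_mul_comm']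

end Convolution

section BiAverage

variable {G : Type*} [Group G] (H K : Subgroup G) [Finite H] [Finite K]

noncomputable def uniformOnSubgroup : MonoidAlgebra ℝ G :=
  ofCoeff <| .ofSupportFinite ((H : Set G).indicator fun _ => (Nat.card H : ℝ)⁻¹)
    ((Set.toFinite (H : Set G)).subset (Set.support_indicator_subset))

variable {H K}

lemma uniformOnSubgroup_coeff (x : G) :
    (uniformOnSubgroup H).coeff x = (H : Set G).indicator (fun _ => (Nat.card H : ℝ)⁻¹) x :=
  rfl

lemma uniformOnSubgroup_nonneg : 0 ≤ (uniformOnSubgroup H).coeff := fun x => by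
  rw [uniformOnSubgroup_coeff]
  exact Set.indicator_nonneg (fun _ _ => by positivity) x

lemma uniformOnSubgroup_coeff_pos {x : G} (hx : x ∈ H) : 0 < (uniformOnSubgroup H).coeff x := by
  rw [uniformOnSubgroup_coeff, Set.indicator_of_mem (SetLike.mem_coe.2 hx)]
  have := Nat.card_pos (α := H)
  positivity

lemma totalMass_uniformOnSubgroup : totalMass (uniformOnSubgroup H) = 1 := by
  rw [← tsum_coeff]
  simp only [uniformOnSubgroup_coeff]
  rw [← tsum_subtype (H : Set G) fun _ => (Nat.card H : ℝ)⁻¹, tsum_const, nsmul_eq_mul]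
  exact mul_inv_cancel₀ (Nat.cast_ne_zero.2 (Nat.card_pos (α := H)).ne')

lemma reflect_uniformOnSubgroup : reflect (uniformOnSubgroup H) = uniformOnSubgroup H := by
  ext x
  simp only [reflect_coeff, uniformOnSubgroup_coeff, Set.indicator_apply, SetLike.mem_coe,
    inv_mem_iff]

lemma single_mul_uniformOnSubgroup {h : G} (hh : h ∈ H) :
    single h 1 * uniformOnSubgroup H = uniformOnSubgroup H := by
  ext x
  simp only [coeff_single_mul_apply, one_mul, uniformOnSubgroup_coeff, Set.indicator_apply,
    SetLike.mem_coe, H.mul_mem_cancel_left (H.inv_mem hh)]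

variable (H K) in
noncomputable def biAverage : MonoidAlgebra ℝ G :=
  uniformOnSubgroup H * uniformOnSubgroup K * uniformOnSubgroup H

lemma biAverage_nonneg : 0 ≤ (biAverage H K).coeff :=
  coeff_mul_nonneg (coeff_mul_nonneg uniformOnSubgroup_nonneg uniformOnSubgroup_nonneg)
    uniformOnSubgroup_nonneg

lemma totalMass_biAverage : totalMass (biAverage H K) = 1 := by
  simp [biAverage, totalMass_uniformOnSubgroup]

lemma reflect_biAverage : reflect (biAverage H K) = biAverage H K := by
  rw [biAverage, reflect_mul, reflect_mul, reflect_uniformOnSubgroup, reflect_uniformOnSubgroup,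
    mul_assoc]

lemma single_mul_biAverage {h : G} (hh : h ∈ H) :
    single h 1 * biAverage H K = biAverage H K := by
  rw [biAverage, ← mul_assoc, ← mul_assoc, single_mul_uniformOnSubgroup hh]

lemma biAverage_coeff_pos {x : G} (hx : x ∈ H ∨ x ∈ K) : 0 < (biAverage H K).coeff x := by
  have h0 : 0 ≤ (uniformOnSubgroup H).coeff := uniformOnSubgroup_nonneg
  have h0' : 0 ≤ (uniformOnSubgroup K).coeff := uniformOnSubgroup_nonneg
  have hinner : 0 < (uniformOnSubgroup H * uniformOnSubgroup K).coeff x := by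
    rcases hx with hx | hx
    · have := coeff_mul_le h0 h0' x x
      rw [inv_mul_cancel] at this
      exact (mul_pos (uniformOnSubgroup_coeff_pos hx)
        (uniformOnSubgroup_coeff_pos K.one_mem)).trans_le this
    · have := coeff_mul_le h0 h0' 1 x
      rw [inv_one, one_mul] at this
      exact (mul_pos (uniformOnSubgroup_coeff_pos H.one_mem)
        (uniformOnSubgroup_coeff_pos hx)).trans_le this
  have := coeff_mul_le (coeff_mul_nonneg h0 h0') h0 x x
  rw [inv_mul_cancel] at this
  exact (mul_pos hinner (uniformOnSubgroup_coeff_pos H.one_mem)).trans_le this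

end BiAverage

end MonoidAlgebra

open MonoidAlgebra

section RandomWalk

variable {G : Type*} [Group G] {f : MonoidAlgebra ℝ G}

lemma isProb_coeff (hf : 0 ≤ f.coeff) (h1 : totalMass f = 1) : IsProb f.coeff :=
  ⟨hf, by rw [tsum_coeff, h1]⟩

lemma measSymm_coeff (hf : reflect f = f) : MeasSymm f.coeff := fun x => by
  rw [← reflect_coeff, hf]

lemma isAperiodic_coeff (h1 : 0 < f.coeff 1) : IsAperiodic f.coeff := fun _ hd =>
  Nat.dvd_one.1 (hd 1 le_rfl (by rwa [convPow_coeff, pow_one]))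

lemma single_mul_pow_succ {g : G} (h : single g 1 * f = f) (n : ℕ) :
    single g 1 * f ^ (n + 1) = f ^ (n + 1) := by
  rw [pow_succ', ← mul_assoc, h]

lemma mem_Amu_of_single_mul_eq (hf : 0 ≤ f.coeff) (h1 : 0 < f.coeff 1) {g : G}
    (h : single g 1 * f = f) : g ∈ Amu f.coeff := by
  refine tendsto_const_nhds.congr' (eventually_atTop.2 ⟨1, fun n hn => ?_⟩)
  obtain ⟨k, rfl⟩ := Nat.exists_eq_add_of_le' hn
  dsimp only
  rw [convPow_coeff, ← mul_one g, coeff_mul_of_single_mul_eq (single_mul_pow_succ h k),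
    div_self (coeff_pow_one_pos hf h1 _).ne']

lemma tsum_coeff_mul_coeff_mul_left (hf : reflect f = f) (g : G) :
    ∑' x, f.coeff x * f.coeff (g * x) = (f * f).coeff g := by
  have hff : reflect (f * f) = f * f := by rw [reflect_mul, hf]
  rw [← measSymm_coeff hff, coeff_mul_eq_tsum]
  refine tsum_congr fun x => ?_
  rw [← measSymm_coeff hf (g * x), mul_inv_rev]

lemma tsum_sq_coeff (hf : reflect f = f) : ∑' x, f.coeff x ^ 2 = (f * f).coeff 1 := by
  simpa [sq] using tsum_coeff_mul_coeff_mul_left hf 1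

lemma tsum_sq_sub_coeff_mul_left (hf : reflect f = f) (g : G) :
    ∑' x, (f.coeff (g * x) - f.coeff x) ^ 2 = 2 * ((f * f).coeff 1 - (f * f).coeff g) := by
  have hshift : ∑' x, f.coeff (g * x) ^ 2 = ∑' x, f.coeff x ^ 2 :=
    (Equiv.mulLeft g).tsum_eq fun x => f.coeff x ^ 2
  have hsq := summable_sq_coeff f
  have hsum : ∑' x, (f.coeff (g * x) - f.coeff x) ^ 2
      = ∑' x, f.coeff (g * x) ^ 2 + ∑' x, f.coeff x ^ 2
        - 2 * ∑' x, f.coeff x * f.coeff (g * x) := by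
    rw [← tsum_mul_left, ← (summable_sq_comp_mul_left hsq g).tsum_add hsq,
      ← ((summable_sq_comp_mul_left hsq g).add hsq).tsum_sub
        ((summable_coeff_mul f _).mul_left 2)]
    exact tsum_congr fun x => by ring
  rw [hsum, hshift, tsum_sq_coeff hf, tsum_coeff_mul_coeff_mul_left hf]
  ring

theorem notMem_Amu_of_pingPong (hf0 : 0 ≤ f.coeff) (hf1 : 0 < f.coeff 1) (hf : reflect f = f)
    {a b : G} (hfa : single a 1 * f = f) {P Q R : Set G}
    (ha : ∀ x, a * x ∈ P ↔ x ∉ P) (hb : ∀ x ∈ P, b * x ∈ Q) (hb' : ∀ x ∈ P, b⁻¹ * x ∈ R)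
    (hPQ : Disjoint P Q) (hPR : Disjoint P R) (hQR : Disjoint Q R) :
    b ∉ Amu f.coeff := by
  have hbound : ∀ n, (f ^ (2 * (n + 1))).coeff b / (f ^ (2 * (n + 1))).coeff 1 ≤ 47 / 48 := by
    intro n
    have hsymm := reflect_pow hf (n + 1)
    have key := tsum_sq_le_of_pingPong ha hb hb' hPQ hPR hQR (summable_sq_coeff _)
      (coeff_mul_of_single_mul_eq (single_mul_pow_succ hfa n))
    rw [tsum_sq_coeff hsymm, tsum_sq_sub_coeff_mul_left hsymm, ← pow_add, ← two_mul] at key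
    rw [div_le_iff₀ (coeff_pow_one_pos hf0 hf1 _)]
    linarith
  intro hmem
  have hsub : Tendsto (fun n => 2 * (n + 1)) atTop atTop :=
    tendsto_atTop_mono (fun n => show n ≤ 2 * (n + 1) by omega) tendsto_id
  have hlim := hmem.comp hsub
  simp only [convPow_coeff, Function.comp_def] at hlim
  have := le_of_tendsto' hlim hbound
  norm_num at this

end RandomWalk

section BiAverageWalk

variable {G : Type*} [Group G] {H K : Subgroup G} [Finite H] [Finite K]

lemma isProb_biAverage : IsProb (biAverage H K).coeff :=
  isProb_coeff biAverage_nonneg totalMass_biAverage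

lemma measSymm_biAverage : MeasSymm (biAverage H K).coeff :=
  measSymm_coeff reflect_biAverage

lemma isAperiodic_biAverage : IsAperiodic (biAverage H K).coeff :=
  isAperiodic_coeff (biAverage_coeff_pos (.inl H.one_mem))

lemma generatingSupport_biAverage (hHK : H ⊔ K = ⊤) :
    GeneratingSupport (biAverage H K).coeff := by
  refine top_le_iff.1 (hHK ▸ sup_le ?_ ?_) <;>
    exact fun x hx => Subgroup.subset_closure (biAverage_coeff_pos (by tauto))

lemma mem_Amu_biAverage {h : G} (hh : h ∈ H) : h ∈ Amu (biAverage H K).coeff :=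
  mem_Amu_of_single_mul_eq biAverage_nonneg (biAverage_coeff_pos (.inl H.one_mem))
    (single_mul_biAverage hh)

end BiAverageWalk

namespace C2FreeC3

/-- `b2` is the letter `b² = b⁻¹`. -/
inductive Letter
  | a
  | b
  | b2
  deriving DecidableEq

def Letter.isA : Letter → Bool
  | .a => true
  | _ => false

abbrev IsReduced (w : List Letter) : Prop := w.IsChain fun x y => x.isA ≠ y.isA

abbrev ReducedWord : Type := {w : List Letter // IsReduced w}

def mulA : List Letter → List Letter
  | .a :: w => w
  | w => .a :: w

def mulB : List Letter → List Letter
  | .b :: w => .b2 :: w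
  | .b2 :: w => w
  | w => .b :: w

variable {w : List Letter}

lemma isReduced_mulA (h : IsReduced w) : IsReduced (mulA w) := by
  match w with
  | [] => exact List.isChain_singleton _
  | .a :: _ => exact h.tail
  | .b :: _ | .b2 :: _ => exact h.cons (by simp [Letter.isA])

lemma isReduced_mulB (h : IsReduced w) : IsReduced (mulB w) := by
  match w with
  | [] => exact List.isChain_singleton _
  | .b :: _ => exact List.isChain_cons.2 ⟨by simpa [Letter.isA] using (List.isChain_cons.1 h).1,
      (List.isChain_cons.1 h).2⟩
  | .b2 :: _ => exact h.tail
  | .a :: _ => exact h.cons (by simp [Letter.isA])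

lemma mulA_mulA (h : IsReduced w) : mulA (mulA w) = w := by
  match w, h with
  | [], _ | [.a], _ | .a :: .b :: _, _ | .a :: .b2 :: _, _ | .b :: _, _ | .b2 :: _, _ => rfl
  | .a :: .a :: _, h => simp [Letter.isA] at h

lemma mulB_mulB_mulB (h : IsReduced w) : mulB (mulB (mulB w)) = w := by
  match w, h with
  | [], _ | .a :: _, _ | [.b], _ | [.b2], _ | .b :: .a :: _, _ | .b2 :: .a :: _, _ => rfl
  | .b :: .b :: _, h | .b :: .b2 :: _, h | .b2 :: .b :: _, h | .b2 :: .b2 :: _, h =>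
    simp [Letter.isA] at h

lemma head?_mulA (h : IsReduced w) :
    (mulA w).head? = some .a ↔ w.head? ≠ some .a := by
  match w, h with
  | [], _ | [.a], _ | .a :: .b :: _, _ | .a :: .b2 :: _, _ | .b :: _, _ | .b2 :: _, _ => simp [mulA]
  | .a :: .a :: _, h => simp [Letter.isA] at h

lemma head?_mulB (h : w.head? = some .a) : (mulB w).head? = some .b := by
  match w, h with
  | .a :: _, _ => rfl

lemma head?_mulB_mulB (h : w.head? = some .a) : (mulB (mulB w)).head? = some .b2 := by
  match w, h with
  | .a :: _, _ => rfl

def permA : Equiv.Perm ReducedWord :=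
  Function.Involutive.toPerm (fun w => ⟨mulA w.1, isReduced_mulA w.2⟩)
    fun w => Subtype.ext (mulA_mulA w.2)

def permB : Equiv.Perm ReducedWord where
  toFun w := ⟨mulB w.1, isReduced_mulB w.2⟩
  invFun w := ⟨mulB (mulB w.1), isReduced_mulB (isReduced_mulB w.2)⟩
  left_inv w := Subtype.ext (mulB_mulB_mulB w.2)
  right_inv w := Subtype.ext (mulB_mulB_mulB w.2)

abbrev Γ : Subgroup (Equiv.Perm ReducedWord) := Subgroup.closure {permA, permB}

def a : Γ := ⟨permA, Subgroup.subset_closure (by simp)⟩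

def b : Γ := ⟨permB, Subgroup.subset_closure (by simp)⟩

lemma closure_a_b : Subgroup.closure {a, b} = ⊤ := by
  convert Subgroup.closure_preimage_eq_top ({permA, permB} : Set (Equiv.Perm ReducedWord)) using 2
  ext
  simp [a, b, Subtype.ext_iff]

lemma fg_Γ : Group.FG Γ :=
  Group.fg_iff.2 ⟨{a, b}, closure_a_b, by simp⟩

lemma zpowers_a_sup_zpowers_b : Subgroup.zpowers a ⊔ Subgroup.zpowers b = ⊤ := by
  rw [← closure_a_b, Set.insert_eq, Subgroup.closure_union, Subgroup.zpowers_eq_closure,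
    Subgroup.zpowers_eq_closure]

instance : Finite (Subgroup.zpowers a) :=
  (isOfFinOrder_iff_pow_eq_one.2 ⟨2, two_pos,
    Subtype.ext <| Equiv.ext fun w => Subtype.ext (mulA_mulA w.2)⟩).finite_zpowers.to_subtype

instance : Finite (Subgroup.zpowers b) :=
  (isOfFinOrder_iff_pow_eq_one.2 ⟨3, three_pos,
    Subtype.ext <| Equiv.ext fun w => Subtype.ext (mulB_mulB_mulB w.2)⟩).finite_zpowers.to_subtype

def startsWith (l : Letter) : Set Γ :=
  {g | ((g : Equiv.Perm ReducedWord) ⟨[], List.isChain_nil⟩).1.head? = some l}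

lemma disjoint_startsWith {l l' : Letter} (h : l ≠ l') : Disjoint (startsWith l) (startsWith l') :=
  Set.disjoint_left.2 fun _ hl hl' => h (Option.some_injective _ (hl.symm.trans hl'))

lemma a_mul_mem_startsWith_a (g : Γ) : a * g ∈ startsWith .a ↔ g ∉ startsWith .a :=
  head?_mulA (Subtype.prop _)

lemma b_mul_mem_startsWith_b (g : Γ) (hg : g ∈ startsWith .a) : b * g ∈ startsWith .b :=
  head?_mulB hg

lemma b_inv_mul_mem_startsWith_b2 (g : Γ) (hg : g ∈ startsWith .a) :
    b⁻¹ * g ∈ startsWith .b2 :=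
  head?_mulB_mulB hg

open Subgroup in
lemma b_notMem_Amu : b ∉ Amu (biAverage (zpowers a) (zpowers b)).coeff :=
  notMem_Amu_of_pingPong biAverage_nonneg (biAverage_coeff_pos (.inl (one_mem _)))
    reflect_biAverage (single_mul_biAverage (mem_zpowers a)) a_mul_mem_startsWith_a
    b_mul_mem_startsWith_b b_inv_mul_mem_startsWith_b2 (disjoint_startsWith (by decide))
    (disjoint_startsWith (by decide)) (disjoint_startsWith (by decide))

end C2FreeC3

theorem stmt13 :
    ∃ (G : Type) (inst : Group G) (μ τ : G → ℝ), Stmt13Witness G μ τ := by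
  open C2FreeC3 Subgroup in
  exact ⟨Γ, inferInstance, (biAverage (zpowers a) (zpowers b)).coeff,
      (biAverage (zpowers b) (zpowers a)).coeff, fg_Γ,
      isProb_biAverage, measSymm_biAverage, isAperiodic_biAverage,
      generatingSupport_biAverage zpowers_a_sup_zpowers_b,
      isProb_biAverage, measSymm_biAverage, isAperiodic_biAverage,
      generatingSupport_biAverage (sup_comm (zpowers a) _ ▸ zpowers_a_sup_zpowers_b),
      fun h => b_notMem_Amu (h ▸ mem_Amu_biAverage (mem_zpowers b))⟩
end
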